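/- arXiv:1304.5142 — 3 statements merged into one kernel-verified Lean document; each statement's English description precedes it below -/
import Mathlib

section
/- Let P and Q be homogeneous polynomials of degree ℓ ≥ 1 in two complex variables z₁, z₂, and let D(P,Q) = (∂P/∂z₁)(∂Q/∂z₂) − (∂P/∂z₂)(∂Q/∂z₁). If P is not identically zero and D(P,Q) is identically zero, then Q = λ·P for some complex constant λ. -/
/-!
Euler's identity `z₁ ∂₁F + z₂ ∂₂F = ℓ F` turns `D(P, Q) = 0` into the vanishing of
`P ∂₁Q - Q ∂₁P`, so the dehomogenizations `p = P(x, 1)`, `q = Q(x, 1)` have vanishing Wronskian.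
After cancelling `gcd(p, q)`, two coprime polynomials with vanishing Wronskian are constant;
hence `q = λ p`, and a homogeneous polynomial of degree `ℓ` is determined by its dehomogenization.
-/

open MvPolynomial

namespace Polynomial

theorem wronskian_mul_mul {R : Type*} [CommRing R] (c a b : R[X]) :
    wronskian (c * a) (c * b) = c ^ 2 * wronskian a b := by
  simp only [wronskian, derivative_mul]
  ring

theorem exists_eq_C_mul_of_wronskian_eq_zero {K : Type*} [Field K] [CharZero K] {p q : K[X]}
    (hp : p ≠ 0) (h : wronskian p q = 0) : ∃ c : K, q = C c * p := by
  obtain ⟨p₁, q₁, g, hcop, rfl, rfl⟩ := UniqueFactorizationMonoid.exists_reduced_factors p hp q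
  have hW : wronskian p₁ q₁ = 0 := by
    rw [wronskian_mul_mul] at h
    exact (mul_eq_zero.mp h).resolve_left (pow_ne_zero 2 (left_ne_zero_of_mul hp))
  obtain ⟨hp₁, hq₁⟩ := hcop.isCoprime.wronskian_eq_zero_iff.mp hW
  rw [eq_C_of_derivative_eq_zero hp₁] at hp ⊢
  rw [eq_C_of_derivative_eq_zero hq₁]
  refine ⟨q₁.coeff 0 / p₁.coeff 0, ?_⟩
  have ha : p₁.coeff 0 ≠ 0 := by simpa using right_ne_zero_of_mul hp
  rw [mul_left_comm, ← C_mul, div_mul_cancel₀ _ ha]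

end Polynomial

namespace MvPolynomial

variable {R : Type*}

noncomputable abbrev dehomogenize [CommSemiring R] : MvPolynomial (Fin 2) R →ₐ[R] Polynomial R :=
  aeval ![Polynomial.X, 1]

theorem dehomogenize_pderiv_zero [CommSemiring R] (F : MvPolynomial (Fin 2) R) :
    dehomogenize (pderiv 0 F) = Polynomial.derivative (dehomogenize F) := by
  induction F using MvPolynomial.induction_on with
  | C a => simp
  | add p q hp hq => simp [hp, hq]
  | mul_X p i hp =>
    fin_cases i
    · simp [Polynomial.derivative_mul, hp]
      ring
    · simp [hp]

theorem IsHomogeneous.nsmul_wronskian_dehomogenize [CommRing R] {n : ℕ}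
    {P Q : MvPolynomial (Fin 2) R} (hP : P.IsHomogeneous n) (hQ : Q.IsHomogeneous n) :
    n • Polynomial.wronskian (dehomogenize P) (dehomogenize Q) =
      -dehomogenize (pderiv 0 P * pderiv 1 Q - pderiv 1 P * pderiv 0 Q) := by
  have eP := congrArg dehomogenize hP.sum_X_mul_pderiv
  have eQ := congrArg dehomogenize hQ.sum_X_mul_pderiv
  have hX₀ : dehomogenize (X 0 : MvPolynomial (Fin 2) R) = Polynomial.X := aeval_X _ _
  have hX₁ : dehomogenize (X 1 : MvPolynomial (Fin 2) R) = 1 := aeval_X _ _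
  simp only [Fin.sum_univ_two, map_add, map_mul, map_sub, map_natCast, nsmul_eq_mul, hX₀, hX₁,
    one_mul, dehomogenize_pderiv_zero, Polynomial.wronskian] at eP eQ ⊢
  linear_combination Polynomial.derivative (dehomogenize P) * eQ -
    Polynomial.derivative (dehomogenize Q) * eP

theorem IsHomogeneous.eq_of_dehomogenize_eq [CommSemiring R] {n : ℕ}
    {P Q : MvPolynomial (Fin 2) R} (hP : P.IsHomogeneous n) (hQ : Q.IsHomogeneous n)
    (h : dehomogenize P = dehomogenize Q) : P = Q := by
  rw [← Polynomial.homogenize_eq_of_isHomogeneous hP rfl, h,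
    Polynomial.homogenize_eq_of_isHomogeneous hQ rfl]

end MvPolynomial

theorem jacobian_vanishing_implies_proportional
    (ℓ : ℕ) (hℓ : 1 ≤ ℓ) (P Q : MvPolynomial (Fin 2) ℂ)
    (hP : P.IsHomogeneous ℓ) (hQ : Q.IsHomogeneous ℓ)
    (hP0 : P ≠ 0)
    (hD : pderiv 0 P * pderiv 1 Q - pderiv 1 P * pderiv 0 Q = 0) :
    ∃ lam : ℂ, Q = lam • P := by
  have hW : Polynomial.wronskian (dehomogenize P) (dehomogenize Q) = 0 := by
    have h := hP.nsmul_wronskian_dehomogenize hQ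
    rw [hD, map_zero, neg_zero, smul_eq_zero] at h
    exact h.resolve_left (by omega)
  have hp : dehomogenize P ≠ 0 := fun h ↦
    hP0 (hP.eq_of_dehomogenize_eq (isHomogeneous_zero _ _ _) (by rw [h, map_zero]))
  obtain ⟨c, hc⟩ := Polynomial.exists_eq_C_mul_of_wronskian_eq_zero hp hW
  refine ⟨c, ?_⟩
  rw [smul_eq_C_mul]
  refine hQ.eq_of_dehomogenize_eq (hP.C_mul c) ?_
  rw [hc, map_mul, algHom_C, Polynomial.algebraMap_eq]
end

section
/- Let G be a compact group acting unitarily on a finite-dimensional Hilbert space H, J a conjugation on H as above with ⟨Jv,Jw⟩ = conj(⟨v,w⟩), and (h_k)_{−ℓ ≤ k ≤ ℓ} an orthonormal basis with h_{−k} = J(h_k). Let D_{jk}(g) = ⟨g·h_k, h_j⟩. Then for all g ∈ G and indices s, m: ⟨ g·(h_s ∧ h_{−s}), h_m ∧ h_{−m} ⟩₂ = |D_{m,s}(g)|² − |D_{m,−s}(g)|², where ⟨v₁∧w₁, v₂∧w₂⟩₂ = ⟨v₁,v₂⟩⟨w₁,w₂⟩ − ⟨v₁,w₂⟩⟨w₁,v₂⟩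 is the induced inner product on Λ²H. In particular |D_{m,s}(g)| = |D_{m,−s}(g)| if and only if g·(h_s ∧ h_{−s}) is orthogonal to h_m ∧ h_{−m}. -/
/-! Since `J` is an equivariant antiunitary, `⟨g(J v), J w⟩ = conj ⟨g v, w⟩`; with `h_{-k} = J h_k`
the two products in the Gram determinant are `a · conj a` and `conj c · c` for `a = D_{m,s}(g)` and
`c = D_{m,-s}(g)`, i.e. `|a|²` and `|c|²`. -/

/-- Index set `{-ℓ, …, ℓ}` (so `d = 2ℓ+1`). -/
abbrev Idx (ℓ : ℕ) : Type := (Finset.Icc (-(ℓ : ℤ)) (ℓ : ℤ) : Finset ℤ)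

/-- Negation on the index set. -/
def negI {ℓ : ℕ} (k : Idx ℓ) : Idx ℓ :=
  ⟨-(k : ℤ), by have := k.2; simp only [Finset.mem_Icc] at *; omega⟩

@[simp]
theorem negI_negI {ℓ : ℕ} (k : Idx ℓ) : negI (negI k) = k :=
  Subtype.ext (neg_neg (k : ℤ))

theorem inner_map_conj_conj {H : Type*} [NormedAddCommGroup H] [InnerProductSpace ℂ H]
    (J : H → H) (hconj : ∀ v w : H, (inner ℂ (J v) (J w) : ℂ) = starRingEnd ℂ (inner ℂ v w))
    (f : H → H) (hf : ∀ v, J (f v) = f (J v)) (v w : H) :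
    (inner ℂ (f (J v)) (J w) : ℂ) = starRingEnd ℂ (inner ℂ (f v) w) := by
  rw [← hf, hconj]

theorem Complex.mul_conj_sub_conj_mul (a c : ℂ) :
    a * starRingEnd ℂ a - starRingEnd ℂ c * c = ((‖a‖ ^ 2 - ‖c‖ ^ 2 : ℝ) : ℂ) := by
  rw [mul_comm (starRingEnd ℂ c), Complex.mul_conj, Complex.mul_conj,
    Complex.normSq_eq_norm_sq, Complex.normSq_eq_norm_sq, Complex.ofReal_sub]

theorem wedge_inner_eq_moduli_difference_general
    {G : Type*} [Group G]
    {H : Type*} [NormedAddCommGroup H] [InnerProductSpace ℂ H]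
    (ρ : G →* (H ≃ₗᵢ[ℂ] H)) (ℓ : ℕ)
    (h : Idx ℓ → H)
    (J : H → H)
    (hconj : ∀ v w : H, (inner ℂ (J v) (J w) : ℂ) = starRingEnd ℂ (inner ℂ v w))
    (hequi : ∀ g v, J (ρ g v) = ρ g (J v))
    (hself : ∀ k, h (negI k) = J (h k))
    (g : G) (s m : Idx ℓ) :
    (inner ℂ (ρ g (h s)) (h m) : ℂ) * inner ℂ (ρ g (h (negI s))) (h (negI m))
        - inner ℂ (ρ g (h s)) (h (negI m)) * inner ℂ (ρ g (h (negI s))) (h m)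
      = (((‖(inner ℂ (ρ g (h s)) (h m) : ℂ)‖) ^ 2
          - (‖(inner ℂ (ρ g (h (negI s))) (h m) : ℂ)‖) ^ 2 : ℝ) : ℂ) ∧
    ((inner ℂ (ρ g (h s)) (h m) : ℂ) * inner ℂ (ρ g (h (negI s))) (h (negI m))
        - inner ℂ (ρ g (h s)) (h (negI m)) * inner ℂ (ρ g (h (negI s))) (h m) = 0
      ↔ ‖(inner ℂ (ρ g (h s)) (h m) : ℂ)‖
          = ‖(inner ℂ (ρ g (h (negI s))) (h m) : ℂ)‖) := by
  have conj_of_neg : ∀ k j, (inner ℂ (ρ g (h (negI k))) (h (negI j)) : ℂ)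
      = starRingEnd ℂ (inner ℂ (ρ g (h k)) (h j)) := fun k j => by
    rw [hself, hself]
    exact inner_map_conj_conj J hconj (ρ g) (hequi g) (h k) (h j)
  have hD : (inner ℂ (ρ g (h s)) (h (negI m)) : ℂ)
      = starRingEnd ℂ (inner ℂ (ρ g (h (negI s))) (h m)) := by
    simpa using conj_of_neg (negI s) m
  rw [hD, conj_of_neg, Complex.mul_conj_sub_conj_mul, Complex.ofReal_eq_zero, sub_eq_zero,
    sq_eq_sq₀ (norm_nonneg _) (norm_nonneg _)]
  exact ⟨rfl, Iff.rfl⟩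

/-- The exterior-square inner-product identity
`⟨g(h_s ∧ h_{-s}), h_m ∧ h_{-m}⟩₂ = |D_{m,s}(g)|² − |D_{m,-s}(g)|²`,
where `D_{j,k}(g) = ⟨g h_k, h_j⟩`, together with the resulting orthogonality criterion. -/
theorem wedge_inner_eq_moduli_difference
    {G : Type*} [Group G]
    {H : Type*} [NormedAddCommGroup H] [InnerProductSpace ℂ H]
    (ρ : G →* (H ≃ₗᵢ[ℂ] H)) (ℓ : ℕ)
    (h : Idx ℓ → H) (hON : Orthonormal ℂ h)
    (J : H → H)
    (hconj : ∀ v w : H, (inner ℂ (J v) (J w) : ℂ) = starRingEnd ℂ (inner ℂ v w))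
    (hequi : ∀ g v, J (ρ g v) = ρ g (J v))
    (hself : ∀ k, h (negI k) = J (h k))
    (g : G) (s m : Idx ℓ) :
    (inner ℂ (ρ g (h s)) (h m) : ℂ) * inner ℂ (ρ g (h (negI s))) (h (negI m))
        - inner ℂ (ρ g (h s)) (h (negI m)) * inner ℂ (ρ g (h (negI s))) (h m)
      = (((‖(inner ℂ (ρ g (h s)) (h m) : ℂ)‖) ^ 2
          - (‖(inner ℂ (ρ g (h (negI s))) (h m) : ℂ)‖) ^ 2 : ℝ) : ℂ) ∧
    ((inner ℂ (ρ g (h s)) (h m) : ℂ) * inner ℂ (ρ g (h (negI s))) (h (negI m))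
        - inner ℂ (ρ g (h s)) (h (negI m)) * inner ℂ (ρ g (h (negI s))) (h m) = 0
      ↔ ‖(inner ℂ (ρ g (h s)) (h m) : ℂ)‖
          = ‖(inner ℂ (ρ g (h (negI s))) (h m) : ℂ)‖) :=
  wedge_inner_eq_moduli_difference_general ρ ℓ h J hconj hequi hself g s m
end

section
/- With the notation of the SU(2)-module H_ℓ and orthonormal basis e_s = √(binom(ℓ,s)) z₁ˢ z₂^{ℓ−s}, for g ∈ SU(2) with entries a, b one has |⟨g·e_s, e_j⟩|² = (binom(ℓ,s)/binom(ℓ,j)) · ( Σ_h binom(s,h)·binom(ℓ−s, j−h)·|a|^{ℓ−s−j+2h}·|b|^{s+j−2h}·(−1)^{s−h} )², where the sum runs over max(0, s+j−ℓ) ≤ h ≤ min(s, j). In particular |⟨g·e_s, e_j⟩|² is a polynomial function of (|a|, |b|) alone, homogeneous of degree 2ℓ. -/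
open MvPolynomial

/-- Action of a `2×2` matrix `g` on polynomials in two variables: `(g·p)(z) = p(z·g)`. -/
noncomputable def matAct (g : Matrix (Fin 2) (Fin 2) ℂ) (p : MvPolynomial (Fin 2) ℂ) :
    MvPolynomial (Fin 2) ℂ :=
  aeval (fun i => ∑ j, C (g j i) * X j) p

/-- The hermitian form on degree-`ℓ` homogeneous polynomials determined by
`⟨z₁ˢz₂^{ℓ−s}, z₁ʳz₂^{ℓ−r}⟩ = δ_{sr} · s!(ℓ−s)!/ℓ!`. -/
noncomputable def polyInner (ℓ : ℕ) (p q : MvPolynomial (Fin 2) ℂ) : ℂ :=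
  ∑ s ∈ Finset.range (ℓ + 1),
    coeff (Finsupp.single 0 s + Finsupp.single 1 (ℓ - s)) p
      * starRingEnd ℂ (coeff (Finsupp.single 0 s + Finsupp.single 1 (ℓ - s)) q)
      * ((s.factorial * (ℓ - s).factorial : ℂ) / (ℓ.factorial : ℂ))

/-- The orthonormal basis element `e_s = √(binom ℓ s) · z₁ˢ z₂^{ℓ−s}`. -/
noncomputable def eBasis (ℓ s : ℕ) : MvPolynomial (Fin 2) ℂ :=
  (Real.sqrt (ℓ.choose s) : ℂ) • (X 0 ^ s * X 1 ^ (ℓ - s))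

/-!
Since `g · (z₁ˢ z₂^{ℓ-s}) = (a z₁ - b̄ z₂)ˢ (b z₁ + ā z₂)^{ℓ-s}`, the binomial theorem gives the
`z₁ʲ z₂^{ℓ-j}` coefficient as a sum over `h` of `a^h ā^{ℓ-s-j+h} b^{j-h} b̄^{s-h}` times signed
binomial coefficients. Writing `a = |a| u`, `b = |b| v` with `|u| = |v| = 1`, every term carries the
same phase `u^{s+j-ℓ} v^{j-s}`, which disappears in the modulus; pairing with `e_j` only divides
the coefficient by `√(binom ℓ j)`.
-/

open Finset Complex ComplexConjugate

section Bivariate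

variable {R : Type*} [CommSemiring R]

noncomputable def biMonomial (p q : ℕ) (c : R) : MvPolynomial (Fin 2) R :=
  monomial (Finsupp.single 0 p + Finsupp.single 1 q) c

theorem single_add_single_eq_iff {p q p' q' : ℕ} :
    (Finsupp.single (0 : Fin 2) p + Finsupp.single 1 q
      = Finsupp.single 0 p' + Finsupp.single 1 q') ↔ p = p' ∧ q = q' := by
  simp [Finsupp.ext_iff, Fin.forall_fin_two]

theorem coeff_biMonomial (p q p' q' : ℕ) (c : R) :
    coeff (Finsupp.single 0 p + Finsupp.single 1 q) (biMonomial p' q' c)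
      = if p' = p ∧ q' = q then c else 0 := by
  simp only [biMonomial, coeff_monomial, single_add_single_eq_iff]

theorem biMonomial_mul (p q p' q' : ℕ) (c c' : R) :
    biMonomial p q c * biMonomial p' q' c' = biMonomial (p + p') (q + q') (c * c') := by
  rw [biMonomial, biMonomial, biMonomial, monomial_mul, Finsupp.single_add, Finsupp.single_add]
  abel_nf

theorem biMonomial_eq (p q : ℕ) (c : R) : biMonomial p q c = C c * X 0 ^ p * X 1 ^ q := by
  rw [biMonomial, X_pow_eq_monomial, X_pow_eq_monomial, C_mul_monomial, monomial_mul, mul_one,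
    mul_one]

theorem linearForm_pow (α γ : R) (n : ℕ) :
    (C α * X 0 + C γ * X 1) ^ n
      = ∑ k ∈ range (n + 1), biMonomial k (n - k) (α ^ k * γ ^ (n - k) * n.choose k) := by
  rw [add_pow]
  refine sum_congr rfl fun k _ => ?_
  rw [biMonomial_eq, mul_pow, mul_pow, ← C_pow, ← C_pow, ← map_natCast C, C_mul, C_mul]
  ring

theorem coeff_linearForm_pow_mul_linearForm_pow {ℓ s : ℕ} (hs : s ≤ ℓ) (j : ℕ) (α β γ δ : R) :
    coeff (Finsupp.single 0 j + Finsupp.single 1 (ℓ - j))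
        ((C α * X 0 + C γ * X 1) ^ s * (C β * X 0 + C δ * X 1) ^ (ℓ - s) : MvPolynomial (Fin 2) R)
      = ∑ h ∈ Icc (s + j - ℓ) (min s j), (s.choose h : R) * ((ℓ - s).choose (j - h) : R)
          * α ^ h * γ ^ (s - h) * β ^ (j - h) * δ ^ (ℓ - s - (j - h)) := by
  rw [linearForm_pow α γ s, linearForm_pow β δ, sum_mul_sum, ← sum_product']
  simp only [biMonomial_mul, coeff_sum, coeff_biMonomial]
  rw [← sum_filter]
  symm
  refine sum_nbij' (fun h => (h, j - h)) Prod.fst ?_ ?_ ?_ ?_ ?_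
  · intro h hh
    simp only [mem_filter, mem_product, mem_range, mem_Icc, le_min_iff] at hh ⊢
    omega
  · intro p hp
    simp only [mem_filter, mem_product, mem_range, mem_Icc, le_min_iff] at hp ⊢
    omega
  · intro h _
    rfl
  · intro p hp
    simp only [mem_filter, mem_product, mem_range] at hp
    exact Prod.ext rfl (by omega)
  · intro h _
    ring

end Bivariate

theorem matAct_eBasis (g : Matrix (Fin 2) (Fin 2) ℂ) (ℓ s : ℕ) :
    matAct g (eBasis ℓ s) = (Real.sqrt (ℓ.choose s) : ℂ) •
      ((C (g 0 0) * X 0 + C (g 1 0) * X 1) ^ s * (C (g 0 1) * X 0 + C (g 1 1) * X 1) ^ (ℓ - s)) := by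
  rw [eBasis, matAct, smul_eq_C_mul, smul_eq_C_mul, map_mul, map_mul, map_pow, map_pow,
    aeval_C, aeval_X, aeval_X]
  simp [Fin.sum_univ_two]

theorem polyInner_eBasis (ℓ j : ℕ) (hj : j ≤ ℓ) (p : MvPolynomial (Fin 2) ℂ) :
    polyInner ℓ p (eBasis ℓ j)
      = coeff (Finsupp.single 0 j + Finsupp.single 1 (ℓ - j)) p / Real.sqrt (ℓ.choose j) := by
  have eBasis_eq : eBasis ℓ j = biMonomial j (ℓ - j) (Real.sqrt (ℓ.choose j) : ℂ) := by
    rw [eBasis, biMonomial_eq, smul_eq_C_mul, mul_assoc]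
  rw [polyInner, sum_eq_single j]
  · have hweight : ((j.factorial * (ℓ - j).factorial : ℂ) / ℓ.factorial) = (ℓ.choose j : ℂ)⁻¹ := by
      rw [Nat.cast_choose ℂ hj, inv_div]
    have hsqrt : ((Real.sqrt (ℓ.choose j) : ℝ) : ℂ) ^ 2 = ℓ.choose j := by
      exact_mod_cast Real.sq_sqrt (Nat.cast_nonneg _)
    have hsqrt0 : ((Real.sqrt (ℓ.choose j) : ℝ) : ℂ) ≠ 0 :=
      ofReal_ne_zero.2 (Real.sqrt_ne_zero'.2 (Nat.cast_pos.2 (Nat.choose_pos hj)))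
    rw [eBasis_eq, coeff_biMonomial, if_pos ⟨rfl, rfl⟩, conj_ofReal, hweight, ← hsqrt]
    field_simp
  · intro m _ hmj
    rw [eBasis_eq, coeff_biMonomial, if_neg (fun h => hmj h.1.symm), map_zero, mul_zero, zero_mul]
  · intro hj'
    exact absurd (mem_range.2 (by omega)) hj'

theorem pow_mul_conj_pow (z : ℂ) (p q : ℕ) :
    z ^ p * conj z ^ q = ‖z‖ ^ (p + q) * exp (arg z * I) ^ ((p : ℤ) - q) := by
  set u := exp (arg z * I)
  have hz : z = ‖z‖ * u := (norm_mul_exp_arg_mul_I z).symm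
  have hu : conj u = u⁻¹ := by
    rw [← exp_conj, map_mul, conj_ofReal, conj_I, ← exp_neg, neg_mul_eq_mul_neg]
  have hu0 : u ≠ 0 := exp_ne_zero _
  rw [zpow_sub₀ hu0, zpow_natCast, zpow_natCast]
  conv_lhs => rw [hz]
  rw [map_mul, conj_ofReal, hu, mul_pow, mul_pow, inv_pow, pow_add]
  field_simp

theorem matrix_coefficient_sum_eq_phase_mul (ℓ s j : ℕ) (a b : ℂ) :
    ∑ h ∈ Icc (s + j - ℓ) (min s j), (s.choose h : ℂ) * ((ℓ - s).choose (j - h) : ℂ)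
        * a ^ h * (-conj b) ^ (s - h) * b ^ (j - h) * conj a ^ (ℓ - s - (j - h))
      = exp (arg a * I) ^ ((s + j : ℤ) - ℓ) * exp (arg b * I) ^ ((j : ℤ) - s)
        * ((∑ h ∈ Icc (s + j - ℓ) (min s j), (s.choose h : ℝ) * ((ℓ - s).choose (j - h) : ℝ)
            * ‖a‖ ^ (ℓ + 2 * h - s - j) * ‖b‖ ^ (s + j - 2 * h) * (-1 : ℝ) ^ (s - h) : ℝ) : ℂ) := by
  push_cast
  rw [mul_sum]
  refine sum_congr rfl fun h hh => ?_
  rw [mem_Icc, le_min_iff] at hh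
  have ha := pow_mul_conj_pow a h (ℓ - s - (j - h))
  rw [show h + (ℓ - s - (j - h)) = ℓ + 2 * h - s - j by omega,
    show (h : ℤ) - (ℓ - s - (j - h) : ℕ) = (s + j : ℤ) - ℓ by omega] at ha
  have hb := pow_mul_conj_pow b (j - h) (s - h)
  rw [show j - h + (s - h) = s + j - 2 * h by omega,
    show ((j - h : ℕ) : ℤ) - (s - h : ℕ) = (j : ℤ) - s by omega] at hb
  calc _ = (a ^ h * conj a ^ (ℓ - s - (j - h))) * (b ^ (j - h) * conj b ^ (s - h))
        * ((-1) ^ (s - h) * s.choose h * (ℓ - s).choose (j - h)) := by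
        rw [neg_pow]; ring
    _ = _ := by rw [ha, hb]; ring

theorem matrix_coefficient_modulus_formula_general (ℓ s j : ℕ) (hs : s ≤ ℓ) (hj : j ≤ ℓ)
    (a b : ℂ) :
    (‖polyInner ℓ
        (matAct !![a, b; -(starRingEnd ℂ b), starRingEnd ℂ a] (eBasis ℓ s))
        (eBasis ℓ j)‖) ^ 2
      = ((ℓ.choose s : ℝ) / (ℓ.choose j : ℝ))
          * (∑ h ∈ Finset.Icc (s + j - ℓ) (min s j),
              (s.choose h : ℝ) * ((ℓ - s).choose (j - h) : ℝ)
                * ‖a‖ ^ (ℓ + 2 * h - s - j)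
                * ‖b‖ ^ (s + j - 2 * h)
                * (-1 : ℝ) ^ (s - h)) ^ 2 := by
  have hphase : ‖exp (arg a * I) ^ ((s + j : ℤ) - ℓ) * exp (arg b * I) ^ ((j : ℤ) - s)‖ = 1 := by
    simp only [norm_mul, norm_zpow, norm_exp_ofReal_mul_I, one_zpow, one_mul]
  rw [polyInner_eBasis ℓ j hj, matAct_eBasis, coeff_smul]
  simp only [Matrix.of_apply, Matrix.cons_val', Matrix.cons_val_zero, Matrix.cons_val_one,
    Matrix.empty_val', Matrix.cons_val_fin_one]
  rw [coeff_linearForm_pow_mul_linearForm_pow hs, matrix_coefficient_sum_eq_phase_mul, smul_eq_mul,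
    norm_div, norm_mul, norm_mul, hphase, one_mul, norm_real, norm_real, norm_real, div_pow, mul_pow]
  simp only [Real.norm_eq_abs, sq_abs, Real.sq_sqrt (Nat.cast_nonneg _)]
  ring

theorem matrix_coefficient_modulus_formula (ℓ s j : ℕ) (hs : s ≤ ℓ) (hj : j ≤ ℓ)
    (a b : ℂ) (hab : ‖a‖ ^ 2 + ‖b‖ ^ 2 = 1) :
    (‖polyInner ℓ
        (matAct !![a, b; -(starRingEnd ℂ b), starRingEnd ℂ a] (eBasis ℓ s))
        (eBasis ℓ j)‖) ^ 2
      = ((ℓ.choose s : ℝ) / (ℓ.choose j : ℝ))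
          * (∑ h ∈ Finset.Icc (s + j - ℓ) (min s j),
              (s.choose h : ℝ) * ((ℓ - s).choose (j - h) : ℝ)
                * ‖a‖ ^ (ℓ + 2 * h - s - j)
                * ‖b‖ ^ (s + j - 2 * h)
                * (-1 : ℝ) ^ (s - h)) ^ 2 :=
  matrix_coefficient_modulus_formula_general ℓ s j hs hj a b
end
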